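/- Let H ∈ (1/2, 1) and t > 0. Then ∫_{ℝ²} (∫_0^t (s - x₁)₊^{H/2 - 1} (s - x₂)₊^{H/2 - 1} ds)² dx₁ dx₂ = B(1-H, H/2)² · t^{2H} / (H(2H-1)). -/

import Mathlib

open MeasureTheory

/-- `(x)₊^γ`: `x ^ γ` if `x > 0`, and `0` otherwise. -/
noncomputable def pospow (x γ : ℝ) : ℝ := if 0 < x then x ^ γ else 0

/-- The Euler Beta function. -/
noncomputable def eulerBeta (p q : ℝ) : ℝ := ∫ x in (0:ℝ)..1, x ^ (p - 1) * (1 - x) ^ (q - 1)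

/-!
Write `k s y = (s - y)₊^(H/2 - 1)`. Squaring the inner integral gives a double integral over
`(s, r) ∈ (0, t]²`, and Tonelli moves the `x`-integral inside, where it factors as
`(∫ k s y * k r y dy)²`. The substitution `y = s - (r - s) u` turns this convolution into
`|s - r|^(H - 1)` times `∫₀^∞ u^(a-1) (1 + u)^(-(a+b)) du = B(a, b)` with `a = H/2`, `b = 1 - H`,
and what is left is `∫∫_{(0,t]²} |s - r|^(2H-2) = t^(2H) / (H (2H - 1))`.
All exchanges are made for `ℝ≥0∞`-valued integrals; the Bochner integrals of the statement are
their `toReal`s, which is faithful because the final value is finite.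
-/

open Set Real
open scoped ENNReal

lemma pospow_of_pos {x : ℝ} (hx : 0 < x) (γ : ℝ) : pospow x γ = x ^ γ := if_pos hx

lemma pospow_of_nonpos {x : ℝ} (hx : x ≤ 0) (γ : ℝ) : pospow x γ = 0 := if_neg hx.not_gt

lemma pospow_nonneg (x γ : ℝ) : 0 ≤ pospow x γ := by
  unfold pospow
  split_ifs with hx
  exacts [rpow_nonneg hx.le γ, le_rfl]

@[fun_prop]
lemma measurable_pospow (γ : ℝ) : Measurable (pospow · γ) :=
  Measurable.ite measurableSet_Ioi (measurable_id.pow_const γ) measurable_const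

lemma pospow_mul {d : ℝ} (hd : 0 < d) (x γ : ℝ) : pospow (d * x) γ = d ^ γ * pospow x γ := by
  rcases lt_or_ge 0 x with hx | hx
  · rw [pospow_of_pos hx, pospow_of_pos (mul_pos hd hx), mul_rpow hd.le hx.le]
  · rw [pospow_of_nonpos hx, pospow_of_nonpos (mul_nonpos_of_nonneg_of_nonpos hd.le hx), mul_zero]

lemma eulerBeta_nonneg (p q : ℝ) : 0 ≤ eulerBeta p q :=
  intervalIntegral.integral_nonneg zero_le_one fun _ hx =>
    mul_nonneg (rpow_nonneg hx.1 _) (rpow_nonneg (sub_nonneg.2 hx.2) _)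

lemma eulerBeta_comm (p q : ℝ) : eulerBeta p q = eulerBeta q p := by
  have h := intervalIntegral.integral_comp_sub_left
    (fun x : ℝ => x ^ (q - 1) * (1 - x) ^ (p - 1)) (1:ℝ) (a := 0) (b := 1)
  simp only [sub_sub_cancel, sub_zero, sub_self] at h
  rw [eulerBeta, eulerBeta, ← h]
  simp only [mul_comm]

lemma integral_Ioi_rpow_mul_one_add_rpow (a b : ℝ) :
    ∫ u in Ioi (0:ℝ), u ^ (a - 1) * (1 + u) ^ (-(a + b)) = eulerBeta a b := by
  have hmaps : (fun u : ℝ => u / (1 + u)) '' Ioi 0 = Ioo 0 1 := by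
    ext x
    constructor
    · rintro ⟨u, hu : 0 < u, rfl⟩
      exact ⟨by positivity, (div_lt_one (by linarith)).2 (by linarith)⟩
    · rintro ⟨hx0, hx1⟩
      refine ⟨x / (1 - x), div_pos hx0 (by linarith), ?_⟩
      field_simp
      ring
  have hderiv : ∀ u ∈ Ioi (0:ℝ),
      HasDerivWithinAt (fun u : ℝ => u / (1 + u)) (1 / (1 + u) ^ 2) (Ioi 0) u := by
    intro u (hu : 0 < u)
    have h := (hasDerivAt_id' u).div ((hasDerivAt_id' u).const_add 1) (by linarith)
    exact (h.congr_deriv (by ring)).hasDerivWithinAt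
  have hinj : InjOn (fun u : ℝ => u / (1 + u)) (Ioi 0) := by
    intro u (hu : 0 < u) v (hv : 0 < v) h
    field_simp at h
    linarith
  have hintegrand : ∀ u ∈ Ioi (0:ℝ), |1 / (1 + u) ^ 2| •
      ((u / (1 + u)) ^ (a - 1) * (1 - u / (1 + u)) ^ (b - 1))
        = u ^ (a - 1) * (1 + u) ^ (-(a + b)) := by
    intro u (hu : 0 < u)
    have hv : 0 < 1 + u := by linarith
    have h1 : |1 / (1 + u) ^ 2| = (1 + u) ^ (-2 : ℝ) := by
      rw [abs_of_pos (by positivity), rpow_neg hv.le, one_div, rpow_two]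
    have h2 : (u / (1 + u)) ^ (a - 1) = u ^ (a - 1) * (1 + u) ^ (-(a - 1)) := by
      rw [div_rpow hu.le hv.le, rpow_neg hv.le, div_eq_mul_inv]
    have h3 : (1 - u / (1 + u)) ^ (b - 1) = (1 + u) ^ (-(b - 1)) := by
      rw [show 1 - u / (1 + u) = (1 + u)⁻¹ by field_simp; ring, inv_rpow hv.le, rpow_neg hv.le]
    rw [smul_eq_mul, h1, h2, h3, show -(a + b) = -2 + -(a - 1) + -(b - 1) by ring,
      rpow_add hv, rpow_add hv]
    ring
  rw [eulerBeta, intervalIntegral.integral_of_le zero_le_one, integral_Ioc_eq_integral_Ioo,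
    ← hmaps, integral_image_eq_integral_abs_deriv_smul measurableSet_Ioi hderiv hinj,
    setIntegral_congr_fun measurableSet_Ioi hintegrand]

lemma integrableOn_Ioi_rpow_mul_one_add_rpow {a b : ℝ} (ha : 0 < a) (hb : 0 < b) :
    IntegrableOn (fun u : ℝ => u ^ (a - 1) * (1 + u) ^ (-(a + b))) (Ioi 0) := by
  have hmeas : AEStronglyMeasurable (fun u : ℝ => u ^ (a - 1) * (1 + u) ^ (-(a + b))) :=
    (by fun_prop : Measurable _).aestronglyMeasurable
  have hsmall : IntegrableOn (fun u : ℝ => u ^ (a - 1) * (1 + u) ^ (-(a + b))) (Ioc 0 1) := by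
    refine Integrable.mono' ((intervalIntegrable_iff_integrableOn_Ioc_of_le zero_le_one).1
      (intervalIntegral.intervalIntegrable_rpow' (r := a - 1) (by linarith))) hmeas.restrict
      ((ae_restrict_iff' measurableSet_Ioc).2 (ae_of_all _ fun u ⟨hu, _⟩ => ?_))
    rw [norm_of_nonneg (by positivity)]
    exact mul_le_of_le_one_right (by positivity)
      (rpow_le_one_of_one_le_of_nonpos (by linarith : (1:ℝ) ≤ 1 + u)
        (by linarith : -(a + b) ≤ 0))
  have hlarge : IntegrableOn (fun u : ℝ => u ^ (a - 1) * (1 + u) ^ (-(a + b))) (Ioi 1) := by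
    refine Integrable.mono' (integrableOn_Ioi_rpow_of_lt (by linarith : -b - 1 < -1) one_pos)
      hmeas.restrict ((ae_restrict_iff' measurableSet_Ioi).2 (ae_of_all _ fun u hu => ?_))
    have hu : (0:ℝ) < u := zero_lt_one.trans hu
    rw [norm_of_nonneg (by positivity), show -b - 1 = (a - 1) + -(a + b) by ring, rpow_add hu]
    exact mul_le_mul_of_nonneg_left
      (rpow_le_rpow_of_nonpos hu (by linarith) (by linarith)) (by positivity)
  simpa only [Ioc_union_Ioi_eq_Ioi zero_le_one] using hsmall.union hlarge

lemma pospow_mul_pospow_one_add_eq_indicator (a b : ℝ) :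
    (fun u => pospow u (a - 1) * pospow (1 + u) (-(a + b)))
      = (Ioi 0).indicator (fun u : ℝ => u ^ (a - 1) * (1 + u) ^ (-(a + b))) := by
  ext u
  rcases lt_or_ge 0 u with hu | hu
  · rw [indicator_of_mem (mem_Ioi.2 hu), pospow_of_pos hu, pospow_of_pos (by linarith)]
  · rw [indicator_of_notMem (notMem_Ioi.2 hu), pospow_of_nonpos hu, zero_mul]

lemma integrable_pospow_mul_pospow_one_add {a b : ℝ} (ha : 0 < a) (hb : 0 < b) :
    Integrable (fun u => pospow u (a - 1) * pospow (1 + u) (-(a + b))) := by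
  rw [pospow_mul_pospow_one_add_eq_indicator, integrable_indicator_iff measurableSet_Ioi]
  exact integrableOn_Ioi_rpow_mul_one_add_rpow ha hb

lemma integral_pospow_mul_pospow_one_add (a b : ℝ) :
    ∫ u, pospow u (a - 1) * pospow (1 + u) (-(a + b)) = eulerBeta a b := by
  rw [pospow_mul_pospow_one_add_eq_indicator, integral_indicator measurableSet_Ioi,
    integral_Ioi_rpow_mul_one_add_rpow]

lemma pospow_sub_mul_pospow_sub_eq {s r : ℝ} (hsr : s < r) (a b y : ℝ) :
    pospow (s - y) (a - 1) * pospow (r - y) (-(a + b))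
      = (r - s) ^ (-b - 1) * (pospow ((s - y) / (r - s)) (a - 1)
          * pospow (1 + (s - y) / (r - s)) (-(a + b))) := by
  have hd : 0 < r - s := sub_pos.2 hsr
  have h1 : s - y = (r - s) * ((s - y) / (r - s)) := by field_simp
  have h2 : r - y = (r - s) * (1 + (s - y) / (r - s)) := by field_simp; ring
  rw [h1, h2, pospow_mul hd, pospow_mul hd, ← h1, show -b - 1 = (a - 1) + -(a + b) by ring,
    rpow_add hd]
  ring

lemma integrable_pospow_sub_mul_pospow_sub {a b s r : ℝ} (ha : 0 < a) (hb : 0 < b)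
    (hsr : s < r) : Integrable (fun y => pospow (s - y) (a - 1) * pospow (r - y) (-(a + b))) := by
  simp_rw [pospow_sub_mul_pospow_sub_eq hsr]
  exact (((integrable_pospow_mul_pospow_one_add ha hb).comp_div (sub_pos.2 hsr).ne').comp_sub_left
    s).const_mul _

lemma integral_pospow_sub_mul_pospow_sub {s r : ℝ} (hsr : s < r) (a b : ℝ) :
    ∫ y, pospow (s - y) (a - 1) * pospow (r - y) (-(a + b)) = eulerBeta a b * (r - s) ^ (-b) := by
  have hd : 0 < r - s := sub_pos.2 hsr
  simp_rw [pospow_sub_mul_pospow_sub_eq hsr]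
  rw [integral_const_mul, integral_sub_left_eq_self
      (fun y => pospow (y / (r - s)) (a - 1) * pospow (1 + y / (r - s)) (-(a + b))),
    Measure.integral_comp_div (fun u => pospow u (a - 1) * pospow (1 + u) (-(a + b))),
    integral_pospow_mul_pospow_one_add, smul_eq_mul, abs_of_pos hd, ← mul_assoc,
    ← rpow_add_one hd.ne', sub_add_cancel, mul_comm]

lemma lintegral_ofReal_pospow_sub_mul_pospow_sub {H s r : ℝ} (hH : H ∈ Ioo (1/2 : ℝ) 1)
    (hsr : s ≠ r) :
    ∫⁻ y, ENNReal.ofReal (pospow (s - y) (H/2 - 1)) * ENNReal.ofReal (pospow (r - y) (H/2 - 1))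
      = ENNReal.ofReal (eulerBeta (1 - H) (H/2) * |s - r| ^ (H - 1)) := by
  wlog hlt : s < r generalizing s r
  · simp_rw [mul_comm (ENNReal.ofReal (pospow (s - _) _)), abs_sub_comm s r]
    exact this hsr.symm (hsr.symm.lt_of_le (not_lt.1 hlt))
  have hexp : -(H/2 + (1 - H)) = H/2 - 1 := by ring
  have hint := integrable_pospow_sub_mul_pospow_sub (a := H/2) (b := 1 - H) (by linarith [hH.1])
    (by linarith [hH.2]) hlt
  have hval := integral_pospow_sub_mul_pospow_sub hlt (H/2) (1 - H)
  rw [hexp] at hint hval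
  simp_rw [← ENNReal.ofReal_mul (pospow_nonneg _ _)]
  rw [← ofReal_integral_eq_lintegral_ofReal hint
      (ae_of_all _ fun y => mul_nonneg (pospow_nonneg _ _) (pospow_nonneg _ _)), hval,
    eulerBeta_comm, abs_sub_comm, abs_of_pos (sub_pos.2 hlt), neg_sub]

lemma intervalIntegrable_abs_rpow {p : ℝ} (hp : -1 < p) (a b : ℝ) :
    IntervalIntegrable (fun x => |x| ^ p) volume a b := by
  have hpos : ∀ c, 0 ≤ c → IntervalIntegrable (fun x => |x| ^ p) volume 0 c := fun c hc =>
    (intervalIntegral.intervalIntegrable_rpow' hp).congr fun x hx => by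
      rw [uIoc_of_le hc] at hx
      simp only [abs_of_pos hx.1]
  have hall : ∀ c, IntervalIntegrable (fun x => |x| ^ p) volume 0 c := by
    intro c
    rcases le_total 0 c with hc | hc
    · exact hpos c hc
    · simpa using (IntervalIntegrable.iff_comp_neg (by simp)).1 (hpos (-c) (neg_nonneg.2 hc))
  exact (hall a).symm.trans (hall b)

lemma integral_abs_rpow {p c : ℝ} (hp : -1 < p) (hc : 0 ≤ c) :
    ∫ x in (0:ℝ)..c, |x| ^ p = c ^ (p + 1) / (p + 1) := by
  rw [intervalIntegral.integral_congr (g := fun x => x ^ p) fun x hx => ?_, integral_rpow (.inl hp),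
    zero_rpow (by linarith), sub_zero]
  rw [uIcc_of_le hc] at hx
  simp only [abs_of_nonneg hx.1]

lemma integral_abs_sub_rpow {p a b s : ℝ} (hp : -1 < p) (ha : a ≤ s) (hb : s ≤ b) :
    ∫ r in a..b, |s - r| ^ p = ((s - a) ^ (p + 1) + (b - s) ^ (p + 1)) / (p + 1) := by
  have hneg : ∫ x in (a - s)..0, |x| ^ p = (s - a) ^ (p + 1) / (p + 1) := by
    have h := intervalIntegral.integral_comp_neg (a := 0) (b := s - a) fun x => |x| ^ p
    simp only [abs_neg, neg_sub, neg_zero] at h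
    rw [← h, integral_abs_rpow hp (sub_nonneg.2 ha)]
  simp_rw [abs_sub_comm s]
  rw [intervalIntegral.integral_comp_sub_right (fun x => |x| ^ p),
    ← intervalIntegral.integral_add_adjacent_intervals (b := 0) (intervalIntegrable_abs_rpow hp _ _)
      (intervalIntegrable_abs_rpow hp _ _), hneg, integral_abs_rpow hp (sub_nonneg.2 hb), add_div]

lemma integral_rpow_add_sub_rpow {q : ℝ} (hq : -1 < q) (t : ℝ) :
    ∫ s in (0:ℝ)..t, (s ^ q + (t - s) ^ q) = 2 * t ^ (q + 1) / (q + 1) := by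
  have hpow : ∫ s in (0:ℝ)..t, s ^ q = t ^ (q + 1) / (q + 1) := by
    rw [integral_rpow (.inl hq), zero_rpow (by linarith), sub_zero]
  have hrefl : ∫ s in (0:ℝ)..t, (t - s) ^ q = t ^ (q + 1) / (q + 1) := by
    rw [intervalIntegral.integral_comp_sub_left (fun x => x ^ q), sub_self, sub_zero, hpow]
  rw [intervalIntegral.integral_add (intervalIntegral.intervalIntegrable_rpow' hq) (by simpa using
      (intervalIntegral.intervalIntegrable_rpow' hq (a := t - 0) (b := t - t)).comp_sub_left t),
    hpow, hrefl]
  ring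

lemma lintegral_lintegral_abs_sub_rpow {p t : ℝ} (hp : -1 < p) (ht : 0 ≤ t) :
    ∫⁻ s in Ioc 0 t, ∫⁻ r in Ioc 0 t, ENNReal.ofReal (|s - r| ^ p)
      = ENNReal.ofReal (2 * t ^ (p + 2) / ((p + 1) * (p + 2))) := by
  have hinner : ∀ s ∈ Ioc 0 t, ∫⁻ r in Ioc 0 t, ENNReal.ofReal (|s - r| ^ p)
      = ENNReal.ofReal ((s ^ (p + 1) + (t - s) ^ (p + 1)) / (p + 1)) := by
    intro s ⟨hs0, hst⟩
    have hint : IntegrableOn (fun r => |s - r| ^ p) (Ioc 0 t) := by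
      rw [← intervalIntegrable_iff_integrableOn_Ioc_of_le ht]
      simp_rw [abs_sub_comm s]
      simpa using (intervalIntegrable_abs_rpow hp (0 - s) (t - s)).comp_sub_right s
    rw [← ofReal_integral_eq_lintegral_ofReal hint (ae_of_all _ fun r => by positivity),
      ← intervalIntegral.integral_of_le ht, integral_abs_sub_rpow hp hs0.le hst, sub_zero]
  have hp1 : 0 < p + 1 := by linarith
  have hcont : Continuous fun s : ℝ => (s ^ (p + 1) + (t - s) ^ (p + 1)) / (p + 1) := by
    have : Continuous fun s : ℝ => s ^ (p + 1) := continuous_id.rpow_const fun _ => .inr hp1.le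
    exact (this.add (this.comp (continuous_const.sub continuous_id))).div_const _
  have hnonneg : ∀ s ∈ Ioc 0 t, 0 ≤ (s ^ (p + 1) + (t - s) ^ (p + 1)) / (p + 1) :=
    fun s ⟨hs0, hst⟩ => by have := sub_nonneg.2 hst; positivity
  rw [setLIntegral_congr_fun measurableSet_Ioc hinner, ← ofReal_integral_eq_lintegral_ofReal
      (hcont.intervalIntegrable 0 t).1 ((ae_restrict_iff' measurableSet_Ioc).2 (ae_of_all _ hnonneg)),
    ← intervalIntegral.integral_of_le ht, intervalIntegral.integral_div,
    integral_rpow_add_sub_rpow (by linarith) t, add_assoc, one_add_one_eq_two]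
  congr 1
  field_simp

lemma lintegral_sq_eq_lintegral_prod_mul {γ : Type*} [MeasurableSpace γ] (m : Measure γ)
    [SFinite m] {g : γ → ℝ≥0∞} (hg : AEMeasurable g m) :
    (∫⁻ z, g z ∂m) ^ 2 = ∫⁻ z, g z.1 * g z.2 ∂m.prod m := by
  rw [sq, lintegral_prod_mul hg hg]

lemma lintegral_sq_lintegral_mul_swap {α β : Type*} [MeasurableSpace α] [MeasurableSpace β]
    {μ : Measure α} {ν : Measure β} [SFinite μ] [SFinite ν] {k : α → β → ℝ≥0∞}
    (hk : Measurable (Function.uncurry k)) :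
    ∫⁻ x, (∫⁻ s, k s x.1 * k s x.2 ∂μ) ^ 2 ∂ν.prod ν
      = ∫⁻ p, (∫⁻ y, k p.1 y * k p.2 y ∂ν) ^ 2 ∂μ.prod μ := by
  calc ∫⁻ x, (∫⁻ s, k s x.1 * k s x.2 ∂μ) ^ 2 ∂ν.prod ν
      = ∫⁻ x, ∫⁻ p, k p.1 x.1 * k p.1 x.2 * (k p.2 x.1 * k p.2 x.2) ∂μ.prod μ ∂ν.prod ν :=
        lintegral_congr fun x => lintegral_sq_eq_lintegral_prod_mul μ (by fun_prop)
    _ = ∫⁻ p, ∫⁻ x, k p.1 x.1 * k p.2 x.1 * (k p.1 x.2 * k p.2 x.2) ∂ν.prod ν ∂μ.prod μ := by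
        simp only [mul_mul_mul_comm]
        exact lintegral_lintegral_swap (by fun_prop)
    _ = ∫⁻ p, (∫⁻ y, k p.1 y * k p.2 y ∂ν) ^ 2 ∂μ.prod μ :=
        lintegral_congr fun p => (lintegral_sq_eq_lintegral_prod_mul ν
          (g := fun y => k p.1 y * k p.2 y) (by fun_prop)).symm

lemma ae_prod_fst_ne_snd {α : Type*} [MeasurableSpace α] [MeasurableEq α] (μ ν : Measure α)
    [SFinite ν] [NullSingletonClass ν] : ∀ᵐ p ∂μ.prod ν, p.1 ≠ p.2 :=
  (Measure.ae_prod_mem_iff_ae_ae_mem measurableSet_diagonal.compl).2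
    (ae_of_all _ fun x => (Measure.ae_ne ν x).mono fun _ hy => Ne.symm hy)

lemma lintegral_sq_lintegral_ofReal_pospow {H t : ℝ} (hH : H ∈ Ioo (1/2 : ℝ) 1) (ht : 0 ≤ t) :
    ∫⁻ x : ℝ × ℝ, (∫⁻ s in Ioc 0 t, ENNReal.ofReal (pospow (s - x.1) (H/2 - 1))
        * ENNReal.ofReal (pospow (s - x.2) (H/2 - 1))) ^ 2
      = ENNReal.ofReal (eulerBeta (1 - H) (H/2) ^ 2 * (t ^ (2 * H) / (H * (2 * H - 1)))) := by
  set c := eulerBeta (1 - H) (H/2)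
  set k : ℝ → ℝ → ℝ≥0∞ := fun s y => ENNReal.ofReal (pospow (s - y) (H/2 - 1))
  set μ := volume.restrict (Ioc (0:ℝ) t)
  rw [Measure.volume_eq_prod, lintegral_sq_lintegral_mul_swap (k := k) (by fun_prop)]
  calc ∫⁻ p, (∫⁻ y, k p.1 y * k p.2 y) ^ 2 ∂μ.prod μ
      = ∫⁻ p, ENNReal.ofReal (c ^ 2) * ENNReal.ofReal (|p.1 - p.2| ^ (2 * H - 2)) ∂μ.prod μ := by
        -- on the diagonal `∫ k s y ^ 2 dy = ∞`, while `|s - s| ^ (H - 1) = 0`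
        refine lintegral_congr_ae ((ae_prod_fst_ne_snd μ μ).mono fun p hp => ?_)
        dsimp only [k]
        rw [lintegral_ofReal_pospow_sub_mul_pospow_sub hH hp,
          ← ENNReal.ofReal_pow (mul_nonneg (eulerBeta_nonneg _ _) (by positivity)),
          ← ENNReal.ofReal_mul (sq_nonneg c), mul_pow, ← rpow_mul_natCast (abs_nonneg _)]
        congr 3
        push_cast
        ring
    _ = ENNReal.ofReal (c ^ 2)
          * ∫⁻ s in Ioc 0 t, ∫⁻ r in Ioc 0 t, ENNReal.ofReal (|s - r| ^ (2 * H - 2)) := by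
        rw [lintegral_const_mul _ (by fun_prop), lintegral_prod _ (by fun_prop)]
    _ = ENNReal.ofReal (c ^ 2 * (t ^ (2 * H) / (H * (2 * H - 1)))) := by
        have hH0 : H ≠ 0 := by linarith [hH.1]
        have h2H1 : 2 * H - 1 ≠ 0 := by linarith [hH.1]
        rw [lintegral_lintegral_abs_sub_rpow (by linarith [hH.1]) ht, ← ENNReal.ofReal_mul (sq_nonneg c),
          show 2 * H - 2 + 2 = 2 * H by ring, show 2 * H - 2 + 1 = 2 * H - 1 by ring]
        congr 1
        field_simp

theorem sq_integral_rosenblatt_kernel (H : ℝ) (hH : H ∈ Set.Ioo (1/2 : ℝ) 1)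
    (t : ℝ) (ht : 0 < t) :
    ∫ x : ℝ × ℝ, (∫ s in (0:ℝ)..t, pospow (s - x.1) (H/2 - 1) * pospow (s - x.2) (H/2 - 1)) ^ 2
      = (eulerBeta (1 - H) (H/2)) ^ 2 * t ^ (2 * H) / (H * (2 * H - 1)) := by
  set F : ℝ × ℝ → ℝ≥0∞ := fun x => ∫⁻ s in Ioc 0 t,
    ENNReal.ofReal (pospow (s - x.1) (H/2 - 1)) * ENNReal.ofReal (pospow (s - x.2) (H/2 - 1))
  have hlin := lintegral_sq_lintegral_ofReal_pospow hH ht.le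
  -- `integral_eq_lintegral_of_nonneg_ae` needs no integrability, so this holds for every `x`
  have hF : ∀ x : ℝ × ℝ,
      ∫ s in (0:ℝ)..t, pospow (s - x.1) (H/2 - 1) * pospow (s - x.2) (H/2 - 1) = (F x).toReal := by
    intro x
    rw [intervalIntegral.integral_of_le ht.le, integral_eq_lintegral_of_nonneg_ae
      (ae_of_all _ fun s => mul_nonneg (pospow_nonneg _ _) (pospow_nonneg _ _)) (by fun_prop)]
    simp only [F, ENNReal.ofReal_mul (pospow_nonneg _ _)]
  have hFm : Measurable F := by
    unfold F
    fun_prop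
  calc _ = ∫ x, (F x ^ 2).toReal := by simp_rw [hF, ENNReal.toReal_pow]
    _ = (∫⁻ x, F x ^ 2).toReal :=
        integral_toReal (by fun_prop) (ae_lt_top (by fun_prop) (hlin ▸ ENNReal.ofReal_ne_top))
    _ = _ := by
        have : 0 < H * (2 * H - 1) := by nlinarith [hH.1]
        rw [hlin, ENNReal.toReal_ofReal (by positivity), mul_div_assoc]
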